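/- Every quasi-Boolean algebra Q embeds into the direct product (Q/χ) × (Q/τ), via x ↦ (x/χ, x/τ); i.e., the map is an injective homomorphism preserving ∨, ∧, *, 0, 1. -/
import Mathlib


/-- A quasi-Boolean algebra (QB-algebra). -/
class QB (Q : Type*) where
  vee : Q → Q → Q
  wedge : Q → Q → Q
  star : Q → Q
  zero : Q
  one : Q
  vee_comm : ∀ x y, vee x y = vee y x
  wedge_comm : ∀ x y, wedge x y = wedge y x
  vee_assoc : ∀ x y z, vee x (vee y z) = vee (vee x y) z
  wedge_assoc : ∀ x y z, wedge x (wedge y z) = wedge (wedge x y) z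
  absorb_vee : ∀ x y, vee x (wedge x y) = vee x x
  absorb_wedge : ∀ x y, wedge x (vee x y) = wedge x x
  vee_quasi : ∀ x y, vee x (vee y y) = vee x y
  wedge_quasi : ∀ x y, wedge x (wedge y y) = wedge x y
  vee_eq_wedge : ∀ x, vee x x = wedge x x
  distrib_vee : ∀ x y z, vee x (wedge y z) = wedge (vee x y) (vee x z)
  distrib_wedge : ∀ x y z, wedge x (vee y z) = vee (wedge x y) (wedge x z)
  vee_one : ∀ x, vee x one = one
  wedge_zero : ∀ x, wedge x zero = zero
  vee_star : ∀ x, vee x (star x) = one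
  wedge_star : ∀ x, wedge x (star x) = zero
  star_wedge_self : ∀ x, star (wedge x x) = vee (star x) (star x)
  star_star : ∀ x, star (star x) = x

open QB

/-- quasi-order: x ≤ y iff x ∨ y = y ∨ y -/
def QB.le {Q : Type*} [QB Q] (x y : Q) : Prop := vee x y = vee y y

/-- regular element -/
def QB.Reg {Q : Type*} [QB Q] (x : Q) : Prop := vee x x = x

section Aux
variable {Q : Type*} [QB Q]

lemma qb_vee_vee (x y : Q) : vee (vee x y) (vee x y) = vee (vee x x) (vee y y) := by
  rw [← vee_assoc, vee_assoc y x y, vee_comm y x, ← vee_assoc x y y, vee_assoc]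

lemma qb_wedge_wedge (x y : Q) :
    wedge (wedge x y) (wedge x y) = wedge (wedge x x) (wedge y y) := by
  rw [← wedge_assoc, wedge_assoc y x y, wedge_comm y x, ← wedge_assoc x y y, wedge_assoc]

lemma qb_wedge_vv (x y : Q) :
    vee (wedge x y) (wedge x y) = wedge (vee x x) (vee y y) := by
  rw [vee_eq_wedge, qb_wedge_wedge, vee_eq_wedge, vee_eq_wedge]

lemma qb_star_vv (x : Q) : vee (star x) (star x) = star (vee x x) := by
  rw [vee_eq_wedge x, star_wedge_self]

lemma chi_equiv : Equivalence (fun x y : Q => vee x x = vee y y) :=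
  ⟨fun _ => rfl, Eq.symm, Eq.trans⟩

lemma tau_equiv : Equivalence (fun x y : Q => x = y ∨ (QB.Reg x ∧ QB.Reg y)) := by
  constructor
  · exact fun _ => Or.inl rfl
  · rintro x y (rfl | ⟨h1, h2⟩); exact Or.inl rfl; exact Or.inr ⟨h2, h1⟩
  · rintro x y z (rfl | ⟨h1, h2⟩) (rfl | ⟨h3, h4⟩)
    · exact Or.inl rfl
    · exact Or.inr ⟨h3, h4⟩
    · exact Or.inr ⟨h1, h2⟩
    · exact Or.inr ⟨h1, h4⟩

lemma reg_vee {x : Q} (y : Q) (hx : QB.Reg x) : QB.Reg (vee y x) := by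
  unfold QB.Reg at *
  rw [qb_vee_vee, hx, vee_comm (vee y y) x, vee_quasi, vee_comm]

lemma reg_wedge {x : Q} (y : Q) (hx : QB.Reg x) : QB.Reg (wedge y x) := by
  unfold QB.Reg at *
  rw [qb_wedge_vv, hx, wedge_comm _ x, vee_eq_wedge y, wedge_quasi, wedge_comm x y]

lemma reg_star {x : Q} (hx : QB.Reg x) : QB.Reg (star x) := by
  unfold QB.Reg at *
  rw [qb_star_vv, hx]

end Aux

theorem stmt16 {Q : Type*} [QB Q] :
    let chi : Q → Q → Prop := fun x y => vee x x = vee y y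
    let tau : Q → Q → Prop := fun x y => x = y ∨ (QB.Reg x ∧ QB.Reg y)
    let f : Q → Quot chi × Quot tau := fun x => (Quot.mk chi x, Quot.mk tau x)
    Function.Injective f ∧
    ∃ v w : (Quot chi × Quot tau) → (Quot chi × Quot tau) → (Quot chi × Quot tau),
      ∃ s : (Quot chi × Quot tau) → (Quot chi × Quot tau),
        (∀ x y : Q, f (vee x y) = v (f x) (f y)) ∧
        (∀ x y : Q, f (wedge x y) = w (f x) (f y)) ∧
        (∀ x : Q, f (star x) = s (f x)) := by
  intro chi tau f
  constructor
  · intro a b hab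
    have h1 : Quot.mk chi a = Quot.mk chi b := congrArg Prod.fst hab
    have h2 : Quot.mk tau a = Quot.mk tau b := congrArg Prod.snd hab
    have hc : chi a b := (chi_equiv.eqvGen_iff).mp (Quot.eq.mp h1)
    have ht : tau a b := (tau_equiv.eqvGen_iff).mp (Quot.eq.mp h2)
    rcases ht with rfl | ⟨ha, hb⟩
    · rfl
    · calc a = vee a a := ha.symm
        _ = vee b b := hc
        _ = b := hb
  · -- congruence proofs
    have chiV : ∀ a b₁ b₂ : Q, chi b₁ b₂ → chi (vee a b₁) (vee a b₂) := by
      intro a b₁ b₂ h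
      show vee _ _ = vee _ _
      rw [qb_vee_vee, qb_vee_vee, h]
    have chiV' : ∀ a₁ a₂ b : Q, chi a₁ a₂ → chi (vee a₁ b) (vee a₂ b) := by
      intro a₁ a₂ b h
      show vee _ _ = vee _ _
      rw [qb_vee_vee, qb_vee_vee, h]
    have chiW : ∀ a b₁ b₂ : Q, chi b₁ b₂ → chi (wedge a b₁) (wedge a b₂) := by
      intro a b₁ b₂ h
      show vee _ _ = vee _ _
      rw [qb_wedge_vv, qb_wedge_vv, h]
    have chiW' : ∀ a₁ a₂ b : Q, chi a₁ a₂ → chi (wedge a₁ b) (wedge a₂ b) := by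
      intro a₁ a₂ b h
      show vee _ _ = vee _ _
      rw [qb_wedge_vv, qb_wedge_vv, h]
    have chiS : ∀ a b : Q, chi a b → chi (star a) (star b) := by
      intro a b h
      show vee _ _ = vee _ _
      rw [qb_star_vv, qb_star_vv, h]
    have tauV : ∀ a b₁ b₂ : Q, tau b₁ b₂ → tau (vee a b₁) (vee a b₂) := by
      rintro a b₁ b₂ (rfl | ⟨h1, h2⟩)
      · exact Or.inl rfl
      · exact Or.inr ⟨reg_vee a h1, reg_vee a h2⟩
    have tauV' : ∀ a₁ a₂ b : Q, tau a₁ a₂ → tau (vee a₁ b) (vee a₂ b) := by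
      rintro a₁ a₂ b (rfl | ⟨h1, h2⟩)
      · exact Or.inl rfl
      · rw [vee_comm a₁ b, vee_comm a₂ b]
        exact Or.inr ⟨reg_vee b h1, reg_vee b h2⟩
    have tauW : ∀ a b₁ b₂ : Q, tau b₁ b₂ → tau (wedge a b₁) (wedge a b₂) := by
      rintro a b₁ b₂ (rfl | ⟨h1, h2⟩)
      · exact Or.inl rfl
      · exact Or.inr ⟨reg_wedge a h1, reg_wedge a h2⟩
    have tauW' : ∀ a₁ a₂ b : Q, tau a₁ a₂ → tau (wedge a₁ b) (wedge a₂ b) := by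
      rintro a₁ a₂ b (rfl | ⟨h1, h2⟩)
      · exact Or.inl rfl
      · rw [wedge_comm a₁ b, wedge_comm a₂ b]
        exact Or.inr ⟨reg_wedge b h1, reg_wedge b h2⟩
    have tauS : ∀ a b : Q, tau a b → tau (star a) (star b) := by
      rintro a b (rfl | ⟨h1, h2⟩)
      · exact Or.inl rfl
      · exact Or.inr ⟨reg_star h1, reg_star h2⟩
    refine ⟨fun p q => (Quot.map₂ vee chiV chiV' p.1 q.1, Quot.map₂ vee tauV tauV' p.2 q.2),
            fun p q => (Quot.map₂ wedge chiW chiW' p.1 q.1, Quot.map₂ wedge tauW tauW' p.2 q.2),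
            fun p => (Quot.map star chiS p.1, Quot.map star tauS p.2),
            fun x y => rfl, fun x y => rfl, fun x => rfl⟩
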